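/- Let (L_{5,9}, ⟨·,·⟩_r) be the Lie algebra with basis {E, Z₁, Z₂, X, Y}, brackets [X,E] = Z₁, [Y,E] = Z₂, [X,Y] = E, and the inner product making the basis orthogonal with ‖E‖² = r², ‖Z₁‖² = ‖Z₂‖² = r⁴, ‖X‖² = ‖Y‖² = 1 (r > 0). If (L_{5,9}, ⟨·,·⟩_r) is isometrically isomorphic to (L_{5,9}, ⟨·,·⟩_{r'}), then r = r'. -/

import Mathlib

noncomputable abbrev V5 : Type := EuclideanSpace ℝ (Fin 5)

/-- basis `{E, Z₁, Z₂, X, Y} = {e 0, e 1, e 2, e 3, e 4}` of `L_{5,9}`. -/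
noncomputable abbrev e (i : Fin 5) : V5 := EuclideanSpace.single i (1 : ℝ)

/-- the inner product `⟨·,·⟩_r` on `L_{5,9}`: the basis `{E, Z₁, Z₂, X, Y}` is
orthogonal with `‖E‖² = r²`, `‖Z₁‖² = ‖Z₂‖² = r⁴`, `‖X‖² = ‖Y‖² = 1`. -/
noncomputable def Bmet (r : ℝ) (u v : V5) : ℝ :=
  r^2 * u 0 * v 0 + r^4 * u 1 * v 1 + r^4 * u 2 * v 2 + u 3 * v 3 + u 4 * v 4

/-! The derived algebra `[L, L] = span {E, Z₁, Z₂}` is preserved by every automorphism, so an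
isometric isomorphism `φ` also preserves its orthogonal complement `span {X, Y}`, on which all the
metrics `⟨·,·⟩_r` agree. Hence `φ X, φ Y` is orthonormal in `span {X, Y}`, so
`φ E = [φ X, φ Y] = ± E`, and comparing `‖E‖²` gives `r² = r'²`. -/

/-- The bracket of `L_{5,9}` in coordinates with respect to `{E, Z₁, Z₂, X, Y}`. -/
noncomputable def l59Bracket (u v : V5) : V5 :=
  (u 3 * v 4 - u 4 * v 3) • e 0 + (u 3 * v 0 - u 0 * v 3) • e 1 + (u 4 * v 0 - u 0 * v 4) • e 2

lemma eq_sum_smul_e (u : V5) : u = ∑ i, u i • e i := by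
  ext j
  fin_cases j <;> simp [Fin.sum_univ_five]

lemma eq_l59Bracket_of_structure_constants (lb : V5 →ₗ[ℝ] V5 →ₗ[ℝ] V5)
    (hanti : ∀ u : V5, lb u u = 0)
    (hb1 : lb (e 3) (e 0) = e 1) (hb2 : lb (e 4) (e 0) = e 2)
    (hb3 : lb (e 3) (e 4) = e 0)
    (hb4 : lb (e 0) (e 1) = 0) (hb5 : lb (e 0) (e 2) = 0)
    (hb6 : lb (e 1) (e 2) = 0) (hb7 : lb (e 1) (e 3) = 0)
    (hb8 : lb (e 1) (e 4) = 0) (hb9 : lb (e 2) (e 3) = 0)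
    (hb10 : lb (e 2) (e 4) = 0) (u v : V5) :
    lb u v = l59Bracket u v := by
  have hskew : ∀ i j, lb (e j) (e i) = -lb (e i) (e j) := fun i j => by
    have h := hanti (e i + e j)
    simp only [map_add, LinearMap.add_apply, hanti, zero_add, add_zero] at h
    exact eq_neg_of_add_eq_zero_left h
  conv_lhs => rw [eq_sum_smul_e u, eq_sum_smul_e v]
  simp only [Fin.sum_univ_five, map_add, map_smul, LinearMap.add_apply, LinearMap.smul_apply,
    hanti, hskew 3 0, hskew 4 0, hskew 3 4, hskew 0 1, hskew 0 2, hskew 1 2, hskew 1 3,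
    hskew 1 4, hskew 2 3, hskew 2 4, hb1, hb2, hb3, hb4, hb5, hb6, hb7, hb8, hb9, hb10,
    l59Bracket]
  module

lemma l59Bracket_e_three_e_four : l59Bracket (e 3) (e 4) = e 0 := by
  simp [l59Bracket]

lemma l59Bracket_e_three_e_zero : l59Bracket (e 3) (e 0) = e 1 := by
  simp [l59Bracket]

lemma l59Bracket_e_four_e_zero : l59Bracket (e 4) (e 0) = e 2 := by
  simp [l59Bracket]

/-- Membership in `span {X, Y}`. -/
def IsHorizontal (u : V5) : Prop := u 0 = 0 ∧ u 1 = 0 ∧ u 2 = 0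

lemma l59Bracket_of_isHorizontal {u v : V5} (hu : IsHorizontal u) (hv : IsHorizontal v) :
    l59Bracket u v = (u 3 * v 4 - u 4 * v 3) • e 0 := by
  simp [l59Bracket, hu.1, hv.1]

lemma Bmet_l59Bracket_eq_zero (r : ℝ) {u : V5} (hu : IsHorizontal u) (a b : V5) :
    Bmet r u (l59Bracket a b) = 0 := by
  simp [Bmet, l59Bracket, hu.1, hu.2.1, hu.2.2]

lemma Bmet_of_isHorizontal (r : ℝ) {u : V5} (hu : IsHorizontal u) (v : V5) :
    Bmet r u v = u 3 * v 3 + u 4 * v 4 := by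
  simp [Bmet, hu.1, hu.2.1, hu.2.2]

lemma Bmet_smul_e_zero_self (r a : ℝ) : Bmet r (a • e 0) (a • e 0) = r ^ 2 * a ^ 2 := by
  simp [Bmet]
  ring

lemma det_sq_eq_one_of_orthonormal {a b c d : ℝ} (hab : a * a + b * b = 1)
    (hcd : c * c + d * d = 1) (horth : a * c + b * d = 0) : (a * d - b * c) ^ 2 = 1 := by
  linear_combination (c * c + d * d) * hab + hcd - (a * c + b * d) * horth

section Isometry

variable {r r' : ℝ} {φ : V5 ≃ₗ[ℝ] V5}
  (hbr : ∀ u v, φ (l59Bracket u v) = l59Bracket (φ u) (φ v))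
  (hiso : ∀ u v, Bmet r' (φ u) (φ v) = Bmet r u v)
include hbr hiso

lemma isHorizontal_map (hr' : r' ≠ 0) {u : V5} (hu : IsHorizontal u) : IsHorizontal (φ u) := by
  -- every bracket is the `φ`-image of a bracket, and `span {X, Y}` is orthogonal to all brackets
  have horth : ∀ a b, Bmet r' (φ u) (l59Bracket a b) = 0 := fun a b => by
    rw [← φ.apply_symm_apply a, ← φ.apply_symm_apply b, ← hbr, hiso]
    exact Bmet_l59Bracket_eq_zero r hu _ _
  have h0 := horth (e 3) (e 4)
  have h1 := horth (e 3) (e 0)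
  have h2 := horth (e 4) (e 0)
  simp only [l59Bracket_e_three_e_four, l59Bracket_e_three_e_zero, l59Bracket_e_four_e_zero,
    Bmet] at h0 h1 h2
  simp [hr'] at h0 h1 h2
  exact ⟨h0, h1, h2⟩

lemma sq_eq_sq_of_isometry (hr' : r' ≠ 0) : r ^ 2 = r' ^ 2 := by
  set X := φ (e 3)
  set Y := φ (e 4)
  have hX : IsHorizontal X := isHorizontal_map hbr hiso hr' (by simp [IsHorizontal])
  have hY : IsHorizontal Y := isHorizontal_map hbr hiso hr' (by simp [IsHorizontal])
  have hXX : X 3 * X 3 + X 4 * X 4 = 1 := by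
    rw [← Bmet_of_isHorizontal r' hX, hiso]; simp [Bmet]
  have hYY : Y 3 * Y 3 + Y 4 * Y 4 = 1 := by
    rw [← Bmet_of_isHorizontal r' hY, hiso]; simp [Bmet]
  have hXY : X 3 * Y 3 + X 4 * Y 4 = 0 := by
    rw [← Bmet_of_isHorizontal r' hX, hiso]; simp [Bmet]
  have hE : φ (e 0) = (X 3 * Y 4 - X 4 * Y 3) • e 0 := by
    conv_lhs => rw [← l59Bracket_e_three_e_four, hbr, l59Bracket_of_isHorizontal hX hY]
  have h := hiso (e 0) (e 0)
  rw [hE, Bmet_smul_e_zero_self, det_sq_eq_one_of_orthonormal hXX hYY hXY, mul_one] at h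
  simpa [Bmet] using h.symm

end Isometry

/-- if `(L_{5,9}, ⟨·,·⟩_r)` and `(L_{5,9}, ⟨·,·⟩_{r'})` are
isometrically isomorphic, then `r = r'`. -/
theorem L59_metrics_pairwise_nonisometric
    (r r' : ℝ) (hr : 0 < r) (hr' : 0 < r')
    (lb : V5 →ₗ[ℝ] V5 →ₗ[ℝ] V5)
    (hanti : ∀ u : V5, lb u u = 0)
    (hb1 : lb (e 3) (e 0) = e 1) (hb2 : lb (e 4) (e 0) = e 2)
    (hb3 : lb (e 3) (e 4) = e 0)
    (hb4 : lb (e 0) (e 1) = 0) (hb5 : lb (e 0) (e 2) = 0)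
    (hb6 : lb (e 1) (e 2) = 0) (hb7 : lb (e 1) (e 3) = 0)
    (hb8 : lb (e 1) (e 4) = 0) (hb9 : lb (e 2) (e 3) = 0)
    (hb10 : lb (e 2) (e 4) = 0)
    (φ : V5 ≃ₗ[ℝ] V5)
    (hφbr : ∀ u v : V5, φ (lb u v) = lb (φ u) (φ v))
    (hφiso : ∀ u v : V5, Bmet r' (φ u) (φ v) = Bmet r u v) :
    r = r' := by
  have hlb :=
    eq_l59Bracket_of_structure_constants lb hanti hb1 hb2 hb3 hb4 hb5 hb6 hb7 hb8 hb9 hb10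
  have hbr : ∀ u v, φ (l59Bracket u v) = l59Bracket (φ u) (φ v) := by
    simpa only [hlb] using hφbr
  exact (sq_eq_sq₀ hr.le hr'.le).1 (sq_eq_sq_of_isometry hbr hφiso hr'.ne')
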